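/- arXiv:1309.6140 — 7 statements merged into one kernel-verified Lean document; each statement's English description precedes it below -/
import Mathlib

section
/- For the system Xᵢ' = Xᵢ(∑ⱼ Xⱼ² − 1) + λᵢYᵢ²/√dᵢ, Yᵢ' = Yᵢ(∑ⱼ Xⱼ² − Xᵢ/√dᵢ), i = 1,…,r, the function 𝓛 = ∑ᵢ (Xᵢ² + λᵢYᵢ²) − 1 satisfies 𝓛' = 2𝓛·(∑ᵢ Xᵢ²) along any solution. -/
open Finset

/-! In the derivative of `Xᵢ² + λᵢ Yᵢ²` the two terms `± 2 λᵢ Xᵢ Yᵢ² / √dᵢ` cancel,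
which leaves `2 (Xᵢ² + λᵢ Yᵢ²) S - 2 Xᵢ²` with `S = ∑ⱼ Xⱼ²`; summing over `i` gives `2 (∑ᵢ (Xᵢ² + λᵢ Yᵢ²) - 1) S`. -/

theorem HasDerivAt.sq_add_mul_sq_of_ode {x y : ℝ → ℝ} {S lam k t : ℝ}
    (hx : HasDerivAt x (x t * (S - 1) + lam * y t ^ 2 / k) t)
    (hy : HasDerivAt y (y t * (S - x t / k)) t) :
    HasDerivAt (fun s => x s ^ 2 + lam * y s ^ 2)
      (2 * (x t ^ 2 + lam * y t ^ 2) * S - 2 * x t ^ 2) t := by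
  refine ((hx.fun_pow 2).fun_add ((hy.fun_pow 2).const_mul lam)).congr_deriv ?_
  ring

theorem stmt_1_general (r : ℕ) (d lam : Fin r → ℝ)
    (X Y : ℝ → Fin r → ℝ)
    (hX : ∀ i s, HasDerivAt (fun s => X s i)
      (X s i * ((∑ j, (X s j) ^ 2) - 1) + lam i * (Y s i) ^ 2 / Real.sqrt (d i)) s)
    (hY : ∀ i s, HasDerivAt (fun s => Y s i)
      (Y s i * ((∑ j, (X s j) ^ 2) - X s i / Real.sqrt (d i))) s) :
    ∀ s, HasDerivAt (fun s => (∑ i, ((X s i) ^ 2 + lam i * (Y s i) ^ 2)) - 1)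
      (2 * ((∑ i, ((X s i) ^ 2 + lam i * (Y s i) ^ 2)) - 1) * (∑ i, (X s i) ^ 2)) s := by
  intro s
  have hsum := HasDerivAt.fun_sum fun i (_ : i ∈ univ) =>
    HasDerivAt.sq_add_mul_sq_of_ode (x := fun s => X s i) (y := fun s => Y s i) (hX i s) (hY i s)
  refine (hsum.sub_const 1).congr_deriv ?_
  simp only [sum_sub_distrib, ← sum_mul, ← mul_sum]
  ring

/-- Along any solution of the soliton subsystem, the Lyapunov
`𝓛 = ∑ (Xᵢ² + λᵢ Yᵢ²) − 1` satisfies `𝓛' = 2 𝓛 ∑ Xᵢ²`. -/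
theorem stmt_1 (r : ℕ) (d lam : Fin r → ℝ) (hd : ∀ i, 0 < d i)
    (X Y : ℝ → Fin r → ℝ)
    (hX : ∀ i s, HasDerivAt (fun s => X s i)
      (X s i * ((∑ j, (X s j) ^ 2) - 1) + lam i * (Y s i) ^ 2 / Real.sqrt (d i)) s)
    (hY : ∀ i s, HasDerivAt (fun s => Y s i)
      (Y s i * ((∑ j, (X s j) ^ 2) - X s i / Real.sqrt (d i))) s) :
    ∀ s, HasDerivAt (fun s => (∑ i, ((X s i) ^ 2 + lam i * (Y s i) ^ 2)) - 1)
      (2 * ((∑ i, ((X s i) ^ 2 + lam i * (Y s i) ^ 2)) - 1) * (∑ i, (X s i) ^ 2)) s :=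
  stmt_1_general r d lam X Y hX hY
end

section
/- Along any solution of the system Xᵢ' = Xᵢ(∑ⱼ Xⱼ² − 1) + λᵢYᵢ²/√dᵢ, Yᵢ' = Yᵢ(∑ⱼ Xⱼ² − Xᵢ/√dᵢ), the function 𝓗 = ∑ᵢ √dᵢ Xᵢ satisfies (𝓗 − 1)' = (𝓗 − 1)(𝓖 − 1) + 𝓛, where 𝓖 = ∑ᵢ Xᵢ² and 𝓛 = ∑ᵢ(Xᵢ² + λᵢYᵢ²) − 1. -/
open Finset

/-- Along any solution of the soliton subsystem, with `𝓗 = ∑ √dᵢ Xᵢ`,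
`𝓖 = ∑ Xᵢ²` and `𝓛 = ∑ (Xᵢ² + λᵢYᵢ²) − 1`, one has
`(𝓗 − 1)' = (𝓗 − 1)(𝓖 − 1) + 𝓛`. -/
theorem stmt_2 (r : ℕ) (d lam : Fin r → ℝ) (hd : ∀ i, 0 < d i)
    (X Y : ℝ → Fin r → ℝ)
    (hX : ∀ i s, HasDerivAt (fun s => X s i)
      (X s i * ((∑ j, (X s j) ^ 2) - 1) + lam i * (Y s i) ^ 2 / Real.sqrt (d i)) s)
    (hY : ∀ i s, HasDerivAt (fun s => Y s i)
      (Y s i * ((∑ j, (X s j) ^ 2) - X s i / Real.sqrt (d i))) s) :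
    ∀ s, HasDerivAt (fun s => (∑ i, Real.sqrt (d i) * X s i) - 1)
      (((∑ i, Real.sqrt (d i) * X s i) - 1) * ((∑ i, (X s i) ^ 2) - 1)
        + ((∑ i, ((X s i) ^ 2 + lam i * (Y s i) ^ 2)) - 1)) s := by
  intro s
  have h : HasDerivAt (fun s => (∑ i, Real.sqrt (d i) * X s i) - 1)
      (∑ i, Real.sqrt (d i) *
        (X s i * ((∑ j, (X s j) ^ 2) - 1) + lam i * (Y s i) ^ 2 / Real.sqrt (d i))) s := by
    have := HasDerivAt.sum (u := (univ : Finset (Fin r)))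
      (fun i _ => ((hX i s).const_mul (Real.sqrt (d i))))
    simpa using this.sub_const 1
  convert h using 1
  have key : ∀ i : Fin r, Real.sqrt (d i) *
      (X s i * ((∑ j, (X s j) ^ 2) - 1) + lam i * (Y s i) ^ 2 / Real.sqrt (d i))
      = Real.sqrt (d i) * X s i * ((∑ j, (X s j) ^ 2) - 1) + lam i * (Y s i) ^ 2 := by
    intro i
    have hne : Real.sqrt (d i) ≠ 0 := ne_of_gt (Real.sqrt_pos.mpr (hd i))
    field_simp
  simp only [key, Finset.sum_add_distrib, ← Finset.sum_mul]
  ring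
end

section
/- If a solution of the system Xᵢ' = Xᵢ(𝓖 − 1) + λᵢYᵢ²/√dᵢ, Yᵢ' = Yᵢ(𝓖 − Xᵢ/√dᵢ) (with 𝓖 = ∑ⱼXⱼ²) satisfies 𝓛(s₀) = 0 and 𝓗(s₀) = 1 at some time s₀, then 𝓛(s) = 0 and 𝓗(s) = 1 for all s in the interval of existence. -/
/-!
Along a solution, `𝓛' = 2𝓖𝓛` and `(𝓗 - 1)' = (𝓗 - 1)(𝓖 - 1) + 𝓛`. Each is a linear equation
`f' = g f` with continuous coefficient `g` (the second one once `𝓛 ≡ 0` is known), and a solution of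
such an equation vanishing at one time vanishes on the whole interval, since `f · exp (-∫ g)` has
zero derivative there.
-/

open Finset Set Real

section LinearODE

variable {I : Set ℝ} {g : ℝ → ℝ} {s₀ : ℝ}

theorem ContinuousOn.exists_hasDerivAt_of_isOpen_of_ordConnected (hI : IsOpen I) [I.OrdConnected]
    (hg : ContinuousOn g I) (hs₀ : s₀ ∈ I) : ∃ Φ : ℝ → ℝ, ∀ s ∈ I, HasDerivAt Φ (g s) s :=
  ⟨fun s => ∫ t in s₀..s, g t, fun s hs =>
    intervalIntegral.integral_hasDerivAt_right
      (hg.mono (OrdConnected.uIcc_subset ‹_› hs₀ hs)).intervalIntegrable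
      (hg.stronglyMeasurableAtFilter hI s hs) (hg.continuousAt (hI.mem_nhds hs))⟩

theorem eqOn_zero_of_hasDerivAt_mul_self (hI : IsOpen I) [I.OrdConnected] (hg : ContinuousOn g I)
    {f : ℝ → ℝ} (hf : ∀ s ∈ I, HasDerivAt f (g s * f s) s) (hs₀ : s₀ ∈ I) (h₀ : f s₀ = 0) :
    EqOn f 0 I := by
  obtain ⟨Φ, hΦ⟩ := hg.exists_hasDerivAt_of_isOpen_of_ordConnected hI hs₀
  have hF : ∀ s ∈ I, HasDerivAt (fun s => f s * exp (-Φ s)) 0 s := fun s hs =>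
    ((hf s hs).fun_mul (hΦ s hs).fun_neg.exp).congr_deriv (by ring)
  intro s hs
  have := hI.is_const_of_deriv_eq_zero (OrdConnected.isPreconnected ‹_›)
    (fun t ht => (hF t ht).differentiableAt.differentiableWithinAt) (fun t ht => (hF t ht).deriv)
    hs hs₀
  simpa [h₀, exp_ne_zero] using this

end LinearODE

namespace Soliton

variable {ι : Type*} [Fintype ι] (d lam : ι → ℝ)

def G (x : ι → ℝ) : ℝ := ∑ j, x j ^ 2

def L (x y : ι → ℝ) : ℝ := ∑ i, (x i ^ 2 + lam i * y i ^ 2) - 1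

noncomputable def H (x : ι → ℝ) : ℝ := ∑ i, √(d i) * x i

noncomputable def fieldX (x y : ι → ℝ) (i : ι) : ℝ := x i * (G x - 1) + lam i * y i ^ 2 / √(d i)

noncomputable def fieldY (x y : ι → ℝ) (i : ι) : ℝ := y i * (G x - x i / √(d i))

variable {d lam} {X Y : ℝ → ι → ℝ} {s : ℝ}

theorem L_eq_G_add_sum (x y : ι → ℝ) : L lam x y = G x + ∑ i, lam i * y i ^ 2 - 1 := by
  rw [L, G, sum_add_distrib]

theorem hasDerivAt_L (hX : ∀ i, HasDerivAt (fun t => X t i) (fieldX d lam (X s) (Y s) i) s)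
    (hY : ∀ i, HasDerivAt (fun t => Y t i) (fieldY d (X s) (Y s) i) s) :
    HasDerivAt (fun t => L lam (X t) (Y t)) (2 * G (X s) * L lam (X s) (Y s)) s := by
  have hsum := HasDerivAt.fun_sum (u := univ) fun i _ =>
    ((hX i).pow 2).add (((hY i).pow 2).const_mul (lam i))
  refine (hsum.sub_const 1).congr_deriv ?_
  -- the cross terms `± 2 lam i * X s i * Y s i ^ 2 / √(d i)` cancel
  have hterm : ∀ i, ((2 : ℕ) : ℝ) * X s i ^ (2 - 1) * fieldX d lam (X s) (Y s) i
      + lam i * (((2 : ℕ) : ℝ) * Y s i ^ (2 - 1) * fieldY d (X s) (Y s) i)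
      = 2 * (G (X s) - 1) * X s i ^ 2 + 2 * G (X s) * (lam i * Y s i ^ 2) := by
    intro i; simp only [fieldX, fieldY]; push_cast; ring
  rw [sum_congr rfl fun i _ => hterm i, sum_add_distrib, ← mul_sum, ← mul_sum, L_eq_G_add_sum, G]
  ring

theorem hasDerivAt_H_sub_one (hd : ∀ i, 0 < d i)
    (hX : ∀ i, HasDerivAt (fun t => X t i) (fieldX d lam (X s) (Y s) i) s) :
    HasDerivAt (fun t => H d (X t) - 1)
      ((H d (X s) - 1) * (G (X s) - 1) + L lam (X s) (Y s)) s := by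
  have hsum := HasDerivAt.fun_sum (u := univ) fun i _ => (hX i).const_mul √(d i)
  refine (hsum.sub_const 1).congr_deriv ?_
  have hterm : ∀ i, √(d i) * fieldX d lam (X s) (Y s) i
      = (G (X s) - 1) * (√(d i) * X s i) + lam i * Y s i ^ 2 := by
    intro i
    have : √(d i) ≠ 0 := (sqrt_pos.2 (hd i)).ne'
    simp only [fieldX]; field_simp
  rw [sum_congr rfl fun i _ => hterm i, sum_add_distrib, ← mul_sum, L_eq_G_add_sum, H]
  ring

end Soliton

/-- The locus `{𝓛 = 0, 𝓗 = 1}` is invariant under the flow of the soliton subsystem. -/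
theorem stmt_3 (r : ℕ) (d lam : Fin r → ℝ) (hd : ∀ i, 0 < d i)
    (a b s₀ : ℝ) (hs₀ : s₀ ∈ Set.Ioo a b)
    (X Y : ℝ → Fin r → ℝ)
    (hX : ∀ i, ∀ s ∈ Set.Ioo a b, HasDerivAt (fun s => X s i)
      (X s i * ((∑ j, (X s j) ^ 2) - 1) + lam i * (Y s i) ^ 2 / Real.sqrt (d i)) s)
    (hY : ∀ i, ∀ s ∈ Set.Ioo a b, HasDerivAt (fun s => Y s i)
      (Y s i * ((∑ j, (X s j) ^ 2) - X s i / Real.sqrt (d i))) s)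
    (hL0 : (∑ i, ((X s₀ i) ^ 2 + lam i * (Y s₀ i) ^ 2)) - 1 = 0)
    (hH0 : (∑ i, Real.sqrt (d i) * X s₀ i) = 1) :
    ∀ s ∈ Set.Ioo a b,
      (∑ i, ((X s i) ^ 2 + lam i * (Y s i) ^ 2)) - 1 = 0 ∧
      (∑ i, Real.sqrt (d i) * X s i) = 1 := by
  have hG : ContinuousOn (fun s => Soliton.G (X s)) (Ioo a b) :=
    continuousOn_finsetSum _ fun j _ => (HasDerivAt.continuousOn fun s hs => hX j s hs).pow 2
  have hL : EqOn (fun s => Soliton.L lam (X s) (Y s)) 0 (Ioo a b) :=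
    eqOn_zero_of_hasDerivAt_mul_self isOpen_Ioo (continuousOn_const.mul hG)
      (fun s hs => Soliton.hasDerivAt_L (fun i => hX i s hs) (fun i => hY i s hs)) hs₀ hL0
  have hH : EqOn (fun s => Soliton.H d (X s) - 1) 0 (Ioo a b) := by
    refine eqOn_zero_of_hasDerivAt_mul_self (g := fun s => Soliton.G (X s) - 1) isOpen_Ioo
      (hG.sub continuousOn_const) (fun s hs => ?_) hs₀ (sub_eq_zero.2 hH0)
    have hLs : Soliton.L lam (X s) (Y s) = 0 := hL hs
    have := Soliton.hasDerivAt_H_sub_one hd fun i => hX i s hs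
    rwa [hLs, add_zero, mul_comm] at this
  exact fun s hs => ⟨hL hs, sub_eq_zero.1 (hH hs)⟩
end

section
/- Characterize the stationary points of the system Xᵢ' = Xᵢ(∑ⱼXⱼ² − 1) + λᵢYᵢ²/√dᵢ, Yᵢ' = Yᵢ(∑ⱼXⱼ² − Xᵢ/√dᵢ) with d₁ = 1, λ₁ = 0, dᵢ > 1 and λᵢ > 0 for i ≥ 2: a point (X,Y) is stationary if and only if it is (i) the origin; or (ii) Yᵢ = 0 for all i and ∑Xᵢ² = 1; or (iii) there is a nonempty A ⊆ {2,…,r} with Xᵢ = √dᵢ ρ_A and λᵢYᵢ² = dᵢ ρ_A(1−ρ_A) for i ∈ A, Xᵢ = Yᵢ = 0 for i ∉ A, where ρ_A = (∑_{j∈A} dⱼ)^{-1}; or (iv) Xᵢ = 0 for all i and Yᵢ = 0 for i > 1 (Y₁ arbitrary); or (v) X₁ = 1, Xᵢ = Yᵢ = 0 for i > 1 (Y₁ arbitrary). -/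
open Finset

/-- Classification of stationary points of the system
`Xᵢ' = Xᵢ(∑Xⱼ² − 1) + λᵢYᵢ²/√dᵢ`, `Yᵢ' = Yᵢ(∑Xⱼ² − Xᵢ/√dᵢ)` when `d₁ = 1`, `λ₁ = 0`,
`dᵢ > 1`, `λᵢ > 0` for `i ≥ 2` (Lemma 2.1). -/
theorem stmt_4 (r : ℕ) (hr : 1 ≤ r) (d lam : Fin (r+1) → ℝ)
    (hd1 : d 0 = 1) (hlam1 : lam 0 = 0)
    (hd : ∀ i : Fin (r+1), i ≠ 0 → 1 < d i) (hlam : ∀ i : Fin (r+1), i ≠ 0 → 0 < lam i)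
    (X Y : Fin (r+1) → ℝ) :
    ((∀ i, X i * ((∑ j, (X j) ^ 2) - 1) + lam i * (Y i) ^ 2 / Real.sqrt (d i) = 0) ∧
     (∀ i, Y i * ((∑ j, (X j) ^ 2) - X i / Real.sqrt (d i)) = 0))
    ↔
    ( -- (i) the origin
      ((∀ i, X i = 0) ∧ (∀ i, Y i = 0)) ∨
      -- (ii) all Yᵢ = 0 and ∑ Xᵢ² = 1
      ((∀ i, Y i = 0) ∧ (∑ i, (X i) ^ 2) = 1) ∨
      -- (iii) supported on a nonempty A ⊆ {2,…,r}
      (∃ A : Finset (Fin (r+1)), A.Nonempty ∧ (0 : Fin (r+1)) ∉ A ∧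
        (∀ i ∈ A, X i = Real.sqrt (d i) * (∑ j ∈ A, d j)⁻¹) ∧
        (∀ i ∈ A, lam i * (Y i) ^ 2 = d i * (∑ j ∈ A, d j)⁻¹ * (1 - (∑ j ∈ A, d j)⁻¹)) ∧
        (∀ i ∉ A, X i = 0 ∧ Y i = 0)) ∨
      -- (iv) Xᵢ = 0 for all i, Yᵢ = 0 for i > 1, Y₁ arbitrary
      ((∀ i, X i = 0) ∧ (∀ i : Fin (r+1), i ≠ 0 → Y i = 0)) ∨
      -- (v) X₁ = 1, Xᵢ = Yᵢ = 0 for i > 1, Y₁ arbitrary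
      (X 0 = 1 ∧ (∀ i : Fin (r+1), i ≠ 0 → X i = 0 ∧ Y i = 0)) ) := by
  have hdpos : ∀ i : Fin (r+1), 0 < d i := by
    intro i
    by_cases h : i = 0
    · rw [h, hd1]; norm_num
    · linarith [hd i h]
  have hsq : ∀ i : Fin (r+1), 0 < Real.sqrt (d i) :=
    fun i => Real.sqrt_pos.2 (hdpos i)
  have hsq2 : ∀ i : Fin (r+1), (Real.sqrt (d i))^2 = d i :=
    fun i => Real.sq_sqrt (hdpos i).le
  constructor
  · rintro ⟨h1, h2⟩
    set S := ∑ j, (X j)^2 with hS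
    have key : ∀ i : Fin (r+1), i ≠ 0 → lam i * (Y i)^2 / Real.sqrt (d i) = 0 → Y i = 0 := by
      intro i hi h
      rw [div_eq_zero_iff] at h
      have h' : lam i * (Y i)^2 = 0 := h.resolve_right (hsq i).ne'
      have hY2 : (Y i)^2 = 0 := by
        rcases mul_eq_zero.1 h' with h | h
        · exact absurd h (hlam i hi).ne'
        · exact h
      exact pow_eq_zero_iff (n := 2) (by norm_num) |>.1 hY2
    by_cases hS0 : S = 0
    · -- case (iv)
      have hsum0 : ∑ j, (X j)^2 = 0 := by rw [← hS]; exact hS0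
      have hX : ∀ i, X i = 0 := by
        intro i
        have h0' := (Finset.sum_eq_zero_iff_of_nonneg
          (fun j _ => sq_nonneg (X j))).1 hsum0 i (mem_univ i)
        exact pow_eq_zero_iff (n := 2) (by norm_num) |>.1 h0'
      right; right; right; left
      refine ⟨hX, fun i hi => ?_⟩
      have h1i := h1 i
      rw [hX i] at h1i
      simp only [zero_mul, zero_add] at h1i
      exact key i hi h1i
    · by_cases hS1 : S = 1
      · -- S = 1
        have hYne : ∀ i : Fin (r+1), i ≠ 0 → Y i = 0 := by
          intro i hi
          have h1i := h1 i
          rw [hS1] at h1i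
          simp only [sub_self, mul_zero, zero_add] at h1i
          exact key i hi h1i
        by_cases hY0 : Y 0 = 0
        · right; left
          refine ⟨fun i => ?_, hS1⟩
          by_cases hi : i = 0
          · rw [hi]; exact hY0
          · exact hYne i hi
        · -- X 0 = 1, case (v)
          right; right; right; right
          have h20 := h2 0
          rw [hS1, hd1, Real.sqrt_one, div_one] at h20
          have hX0 : X 0 = 1 := by
            rcases mul_eq_zero.1 h20 with h | h
            · exact absurd h hY0
            · linarith
          refine ⟨hX0, fun i hi => ⟨?_, hYne i hi⟩⟩
          have hadd : (X 0)^2 + ∑ j ∈ Finset.univ.erase (0 : Fin (r+1)), (X j)^2 = S := by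
            rw [hS]; exact Finset.add_sum_erase (Finset.univ : Finset (Fin (r+1))) (fun j => (X j)^2) (mem_univ 0)
          rw [hX0, hS1] at hadd
          have hrest0 : ∑ j ∈ Finset.univ.erase (0 : Fin (r+1)), (X j)^2 = 0 := by
            nlinarith [hadd]
          have := (Finset.sum_eq_zero_iff_of_nonneg (fun j _ => sq_nonneg (X j))).1 hrest0 i
            (Finset.mem_erase.2 ⟨hi, mem_univ i⟩)
          exact pow_eq_zero_iff (n := 2) (by norm_num) |>.1 this
      · -- S ≠ 0, S ≠ 1 : case (iii)
        have hX0 : X 0 = 0 := by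
          have h10 := h1 0
          rw [hlam1] at h10
          simp only [zero_mul, zero_div, add_zero] at h10
          rcases mul_eq_zero.1 h10 with h | h
          · exact h
          · exact absurd (by linarith : S = 1) hS1
        have hY0 : Y 0 = 0 := by
          have h20 := h2 0
          rw [hX0] at h20
          simp only [zero_div, sub_zero] at h20
          rcases mul_eq_zero.1 h20 with h | h
          · exact h
          · exact absurd h hS0
        set A : Finset (Fin (r+1)) := Finset.univ.filter (fun i => Y i ≠ 0) with hA
        have hmemA : ∀ i, i ∈ A ↔ Y i ≠ 0 := by
          intro i; simp [hA]
        have h0A : (0 : Fin (r+1)) ∉ A := by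
          rw [hmemA]; simpa using hY0
        have hXinA : ∀ i ∈ A, X i = S * Real.sqrt (d i) := by
          intro i hi
          have h2i := h2 i
          rcases mul_eq_zero.1 h2i with h | h
          · exact absurd h ((hmemA i).1 hi)
          · have hs := (hsq i).ne'
            have hdiv : X i / Real.sqrt (d i) = S := by linarith
            rw [div_eq_iff hs] at hdiv
            exact hdiv
        have hXout : ∀ i ∉ A, X i = 0 ∧ Y i = 0 := by
          intro i hi
          have hYi : Y i = 0 := by
            by_contra h
            exact hi ((hmemA i).2 h)
          refine ⟨?_, hYi⟩
          have h1i := h1 i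
          rw [hYi] at h1i
          simp only [ne_eq, OfNat.ofNat_ne_zero, not_false_eq_true, zero_pow, mul_zero,
            zero_div, add_zero] at h1i
          rcases mul_eq_zero.1 h1i with h | h
          · exact h
          · exact absurd (by linarith : S = 1) hS1
        have hAne : A.Nonempty := by
          by_contra h
          rw [Finset.not_nonempty_iff_eq_empty] at h
          apply hS0
          rw [hS]
          apply Finset.sum_eq_zero
          intro j _
          have : X j = 0 := (hXout j (by rw [h]; exact Finset.notMem_empty j)).1
          rw [this]; ring
        set D := ∑ j ∈ A, d j with hD
        have hSA : S = ∑ i ∈ A, (X i)^2 := by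
          rw [hS]
          symm
          apply Finset.sum_subset (Finset.subset_univ A)
          intro x _ hx
          rw [(hXout x hx).1]; ring
        have hSD : S = S^2 * D := by
          calc S = ∑ i ∈ A, (X i)^2 := hSA
            _ = ∑ i ∈ A, S^2 * d i := by
                apply Finset.sum_congr rfl
                intro i hi
                rw [hXinA i hi, mul_pow, hsq2 i]
            _ = S^2 * D := by rw [hD, Finset.mul_sum]
        have hSDone : S * D = 1 := by
          have hz : S * (S * D - 1) = 0 := by linear_combination -hSD
          rcases mul_eq_zero.1 hz with h | h
          · exact absurd h hS0
          · linarith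
        have hDne : D ≠ 0 := by
          intro h; rw [h, mul_zero] at hSDone; exact one_ne_zero hSDone.symm
        have hSval : S = D⁻¹ := by
          field_simp
          linear_combination hSDone
        right; right; left
        refine ⟨A, hAne, h0A, ?_, ?_, hXout⟩
        · intro i hi
          rw [hXinA i hi, hSval, ← hD]; ring
        · intro i hi
          have hs := (hsq i).ne'
          have h1i := h1 i
          rw [hXinA i hi] at h1i
          have h1i' : (S * Real.sqrt (d i) * (S - 1) + lam i * (Y i)^2 / Real.sqrt (d i))
              * Real.sqrt (d i) = 0 := by rw [h1i]; ring
          rw [add_mul, div_mul_cancel₀ _ hs] at h1i'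
          have hlamY : lam i * (Y i)^2 = d i * S * (1 - S) := by
            linear_combination h1i' - S*(S-1)*(hsq2 i)
          rw [hlamY, hSval, ← hD]
  · rintro (⟨hX, hY⟩ | ⟨hY, hS⟩ | ⟨A, hAne, h0A, hXA, hYA, hout⟩ | ⟨hX, hY⟩ | ⟨hX0, hrest⟩)
    · constructor
      · intro i; rw [hX i, hY i]; ring
      · intro i; rw [hY i]; ring
    · constructor
      · intro i; rw [hS, hY i]; ring
      · intro i; rw [hY i]; ring
    · -- case (iii)
      set D := ∑ j ∈ A, d j with hD
      have hD1 : 1 < D := by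
        obtain ⟨a, ha⟩ := hAne
        have haz : a ≠ 0 := fun h => h0A (h ▸ ha)
        calc (1:ℝ) < d a := hd a haz
          _ ≤ D := Finset.single_le_sum (f := d) (fun j hj => (hdpos j).le) ha
      have hDpos : (0:ℝ) < D := by linarith
      have hDne : D ≠ 0 := hDpos.ne'
      have hSval : ∑ j, (X j)^2 = D⁻¹ := by
        rw [show ∑ j, (X j)^2 = ∑ j ∈ A, (X j)^2 from by
          symm
          apply Finset.sum_subset (Finset.subset_univ A)
          intro x _ hx
          rw [(hout x hx).1]; ring]
        have hterm : ∀ i ∈ A, (X i)^2 = d i * D⁻¹^2 := by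
          intro i hi
          rw [hXA i hi, mul_pow, hsq2 i]
        rw [Finset.sum_congr rfl hterm, ← Finset.sum_mul, ← hD]
        field_simp
      constructor
      · intro i
        by_cases hi : i ∈ A
        · rw [hSval, hXA i hi, hYA i hi]
          set s := Real.sqrt (d i) with hsdef
          have hs : s ≠ 0 := (hsq i).ne'
          have hs2 : s ^ 2 = d i := hsq2 i
          rw [← hs2]
          field_simp
          ring
        · rw [(hout i hi).1, (hout i hi).2]
          simp
      · intro i
        by_cases hi : i ∈ A
        · rw [hSval, hXA i hi]
          rw [mul_comm (Real.sqrt (d i)) D⁻¹, mul_div_assoc, div_self (hsq i).ne',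
            mul_one, sub_self, mul_zero]
        · rw [(hout i hi).2]; ring
    · -- case (iv)
      have hS0 : ∑ j, (X j)^2 = 0 := by
        apply Finset.sum_eq_zero; intro j _; rw [hX j]; ring
      constructor
      · intro i
        rw [hS0, hX i]
        by_cases hi : i = 0
        · rw [hi, hlam1]; ring
        · rw [hY i hi]; ring
      · intro i
        rw [hS0, hX i]
        simp
    · -- case (v)
      have hS1 : ∑ j, (X j)^2 = 1 := by
        rw [Finset.sum_eq_single_of_mem 0 (mem_univ 0)
          (fun j _ hj => by rw [(hrest j hj).1]; ring), hX0]
        norm_num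
      constructor
      · intro i
        rw [hS1]
        by_cases hi : i = 0
        · rw [hi, hlam1]; ring
        · rw [(hrest i hi).2]; ring
      · intro i
        rw [hS1]
        by_cases hi : i = 0
        · rw [hi, hX0, hd1, Real.sqrt_one]
          norm_num
        · rw [(hrest i hi).2]; ring
end

section
/- Let 0 < X₁ < 1, n ≥ 3, and 𝓖 ≥ X₁² + (1−X₁)²/(n−1). Then the expression N = (1−X₁)(n−2−(n−3)X₁−X₁²)/(n−1) + 𝓖(−X₁ + 2 − n) satisfies N ≤ X₁²(2 − n − X₁) ≤ 0. -/
/-- Key algebraic inequality in Lemma 3.9: for `0 < X₁ < 1`, `n ≥ 3` and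
`𝓖 ≥ X₁² + (1−X₁)²/(n−1)`, the numerator
`N = (1−X₁)(n−2−(n−3)X₁−X₁²)/(n−1) + 𝓖(−X₁+2−n)` satisfies
`N ≤ X₁²(2−n−X₁) ≤ 0`. -/
theorem stmt_12 (n X₁ G : ℝ) (hn : 3 ≤ n) (hX0 : 0 < X₁) (hX1 : X₁ < 1)
    (hG : X₁ ^ 2 + (1 - X₁) ^ 2 / (n - 1) ≤ G) :
    (1 - X₁) * (n - 2 - (n - 3) * X₁ - X₁ ^ 2) / (n - 1) + G * (-X₁ + 2 - n) ≤
      X₁ ^ 2 * (2 - n - X₁) ∧ X₁ ^ 2 * (2 - n - X₁) ≤ 0 := by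
  have hn1 : (0:ℝ) < n - 1 := by linarith
  have hcoef : -X₁ + 2 - n < 0 := by linarith
  constructor
  · have h1 : G * (-X₁ + 2 - n) ≤ (X₁ ^ 2 + (1 - X₁) ^ 2 / (n - 1)) * (-X₁ + 2 - n) := by
      nlinarith
    have key : (1 - X₁) * (n - 2 - (n - 3) * X₁ - X₁ ^ 2) / (n - 1)
        + (X₁ ^ 2 + (1 - X₁) ^ 2 / (n - 1)) * (-X₁ + 2 - n) = X₁ ^ 2 * (2 - n - X₁) := by
      field_simp
      ring
    linarith
  · nlinarith [sq_nonneg X₁]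
end

section
/- On the set 𝓓 = {(X,Y) : 𝓛 = 0, 𝓗 = 1, Yᵢ > 0 for i ≥ 2, |X₁−1| < √2}, the function 𝓕̂ = (1 − (1−X₁)²/(n−1)) / ∏_{i=2}^r (λᵢYᵢ²)^{dᵢ/(n−1)} attains its global minimum value (n−1)·∏_{i=2}^r dᵢ^{−dᵢ/(n−1)} exactly at the point E given by X₁ = 0, Xᵢ = √dᵢ/(n−1), λᵢYᵢ² = (n−2)dᵢ/(n−1)² for i ≥ 2. -/
open Finset

set_option maxHeartbeats 1600000 in
/-- Lemma 3.10: on the set `𝓓 = {𝓛 = 0, 𝓗 = 1, Yᵢ > 0 (i ≥ 2), |X₁ − 1| < √2}`, the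
function `𝓕̂ = (1 − (1−X₁)²/(n−1)) / ∏_{i≥2} (λᵢYᵢ²)^{dᵢ/(n−1)}` attains its global
minimum `(n−1) ∏_{i≥2} dᵢ^{−dᵢ/(n−1)}` exactly at the point `E` where `X₁ = 0`,
`Xᵢ = √dᵢ/(n−1)` and `λᵢYᵢ² = (n−2)dᵢ/(n−1)²` for `i ≥ 2`. -/
theorem stmt_13 (r : ℕ) (hr : 1 ≤ r) (d : Fin (r+1) → ℕ) (lam : Fin (r+1) → ℝ)
    (hd1 : d 0 = 1) (hlam1 : lam 0 = 0)
    (hd : ∀ i : Fin (r+1), i ≠ 0 → 1 < d i) (hlam : ∀ i : Fin (r+1), i ≠ 0 → 0 < lam i)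
    (n : ℕ) (hn : n = ∑ i, d i)
    (X Y : Fin (r+1) → ℝ)
    (hL : ∑ i, ((X i) ^ 2 + lam i * (Y i) ^ 2) = 1)
    (hH : ∑ i, Real.sqrt (d i) * X i = 1)
    (hY : ∀ i : Fin (r+1), i ≠ 0 → 0 < Y i)
    (hX1 : |X 0 - 1| < Real.sqrt 2) :
    ((n : ℝ) - 1) * ∏ i ∈ Finset.univ.erase 0, ((d i : ℝ)) ^ (-(d i : ℝ) / ((n : ℝ) - 1)) ≤
      (1 - (1 - X 0) ^ 2 / ((n : ℝ) - 1)) /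
        ∏ i ∈ Finset.univ.erase 0, (lam i * (Y i) ^ 2) ^ ((d i : ℝ) / ((n : ℝ) - 1)) ∧
    ((1 - (1 - X 0) ^ 2 / ((n : ℝ) - 1)) /
        ∏ i ∈ Finset.univ.erase 0, (lam i * (Y i) ^ 2) ^ ((d i : ℝ) / ((n : ℝ) - 1)) =
      ((n : ℝ) - 1) * ∏ i ∈ Finset.univ.erase 0, ((d i : ℝ)) ^ (-(d i : ℝ) / ((n : ℝ) - 1))
      ↔ (X 0 = 0 ∧ ∀ i : Fin (r+1), i ≠ 0 →
          X i = Real.sqrt (d i) / ((n : ℝ) - 1) ∧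
          lam i * (Y i) ^ 2 = ((n : ℝ) - 2) * (d i : ℝ) / ((n : ℝ) - 1) ^ 2)) := by
  classical
  set T := (Finset.univ.erase (0 : Fin (r+1))) with hT
  set m : ℝ := (n:ℝ) - 1 with hm
  have h10 : (⟨1, by omega⟩ : Fin (r+1)) ≠ 0 := by simp [Fin.ext_iff]
  have h1T : (⟨1, by omega⟩ : Fin (r+1)) ∈ T := Finset.mem_erase.mpr ⟨h10, Finset.mem_univ _⟩
  have hiT : ∀ i ∈ T, i ≠ (0 : Fin (r+1)) := fun i hi => (Finset.mem_erase.mp hi).1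
  have hmemT : ∀ i : Fin (r+1), i ≠ 0 → i ∈ T := fun i hi =>
    Finset.mem_erase.mpr ⟨hi, Finset.mem_univ _⟩
  have hdT : ∀ i ∈ T, 2 ≤ d i := fun i hi => hd i (hiT i hi)
  have hnsplit : d 0 + ∑ i ∈ T, d i = n := by
    rw [hn, hT]; exact Finset.add_sum_erase _ _ (Finset.mem_univ 0)
  have hn3 : 3 ≤ n := by
    have h1 : 2 ≤ d ⟨1, by omega⟩ := hdT _ h1T
    have h2 : d ⟨1, by omega⟩ ≤ ∑ i ∈ T, d i :=
      Finset.single_le_sum (fun i _ => Nat.zero_le _) h1T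
    omega
  have hm2 : (2:ℝ) ≤ m := by
    have : (3:ℝ) ≤ (n:ℝ) := by exact_mod_cast hn3
    rw [hm]; linarith
  have hm0 : (0:ℝ) < m := by linarith
  have hm1 : (0:ℝ) < m - 1 := by linarith
  have hsumd : ∑ i ∈ T, (d i : ℝ) = m := by
    have h : ((d 0 : ℕ) : ℝ) + ∑ i ∈ T, ((d i : ℕ) : ℝ) = (n : ℝ) := by
      rw [← Nat.cast_sum, ← Nat.cast_add, hnsplit]
    rw [hd1] at h
    push_cast at h
    rw [hm]; linarith
  have hdpos : ∀ i ∈ T, (0:ℝ) < (d i : ℝ) := fun i hi => by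
    have := hdT i hi; positivity
  have ha : ∀ i ∈ T, (0:ℝ) < lam i * Y i ^ 2 := fun i hi =>
    mul_pos (hlam i (hiT i hi)) (pow_pos (hY i (hiT i hi)) 2)
  -- split the constraints
  set S := ∑ i ∈ T, lam i * Y i ^ 2 with hS'
  have hSpos : 0 < S := Finset.sum_pos ha ⟨_, h1T⟩
  have hLsplit := Finset.add_sum_erase Finset.univ
    (fun i => X i ^ 2 + lam i * Y i ^ 2) (Finset.mem_univ (0 : Fin (r+1)))
  rw [← hT, hL] at hLsplit
  rw [Finset.sum_add_distrib, ← hS'] at hLsplit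
  have hlam0 : lam 0 * Y 0 ^ 2 = 0 := by rw [hlam1]; ring
  have hU : X 0 ^ 2 + (∑ i ∈ T, X i ^ 2) + S = 1 := by
    linarith [hLsplit]
  have hHsplit := Finset.add_sum_erase Finset.univ
    (fun i => Real.sqrt (d i) * X i) (Finset.mem_univ (0 : Fin (r+1)))
  rw [← hT, hH] at hHsplit
  have hsq1 : Real.sqrt (d 0) = 1 := by rw [hd1]; simp
  have ht : ∑ i ∈ T, Real.sqrt (d i) * X i = 1 - X 0 := by
    simp only [hsq1, one_mul] at hHsplit; linarith [hHsplit]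
  -- Cauchy–Schwarz identity
  have hCSid : ∑ i ∈ T, (X i - (1 - X 0)/m * Real.sqrt (d i)) ^ 2
      = (∑ i ∈ T, X i ^ 2) - (1 - X 0) ^ 2 / m := by
    have expand : ∀ i ∈ T, (X i - (1 - X 0)/m * Real.sqrt (d i)) ^ 2
        = X i ^ 2 - (2 * ((1 - X 0)/m)) * (Real.sqrt (d i) * X i)
          + ((1 - X 0)/m) ^ 2 * (d i : ℝ) := by
      intro i hi
      have h := Real.sq_sqrt (le_of_lt (hdpos i hi))
      linear_combination (((1 - X 0)/m) ^ 2) * h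
    rw [Finset.sum_congr rfl expand, Finset.sum_add_distrib, Finset.sum_sub_distrib,
      ← Finset.mul_sum, ← Finset.mul_sum, ht, hsumd]
    field_simp
    ring
  have hCS : (1 - X 0) ^ 2 / m ≤ ∑ i ∈ T, X i ^ 2 := by
    have h := Finset.sum_nonneg (fun i (_ : i ∈ T) =>
      sq_nonneg (X i - (1 - X 0)/m * Real.sqrt (d i)))
    linarith [hCSid, h]
  -- products
  set P := ∏ i ∈ T, (lam i * Y i ^ 2) ^ ((d i : ℝ)/m) with hP'
  set G := ∏ i ∈ T, (d i : ℝ) ^ ((d i : ℝ)/m) with hG'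
  have hPpos : 0 < P := Finset.prod_pos fun i hi => Real.rpow_pos_of_pos (ha i hi) _
  have hGpos : 0 < G := Finset.prod_pos fun i hi => Real.rpow_pos_of_pos (hdpos i hi) _
  have hQG : ∏ i ∈ T, (d i : ℝ) ^ (-(d i : ℝ)/m) = G⁻¹ := by
    rw [hG', ← Finset.prod_inv_distrib]
    refine Finset.prod_congr rfl fun i hi => ?_
    rw [neg_div, Real.rpow_neg (le_of_lt (hdpos i hi))]
  have hsumw : ∑ i ∈ T, (d i : ℝ)/m = 1 := by
    rw [← Finset.sum_div, hsumd]; field_simp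
  set A := S/m with hA'
  have hApos : 0 < A := div_pos hSpos hm0
  have hzsum : ∑ i ∈ T, ((d i : ℝ)/m) * ((lam i * Y i ^ 2)/(d i)) = A := by
    have h1 : ∀ i ∈ T, ((d i : ℝ)/m) * ((lam i * Y i ^ 2)/(d i)) = (lam i * Y i ^ 2)/m := by
      intro i hi
      have hd0 := (hdpos i hi).ne'
      field_simp
    rw [Finset.sum_congr rfl h1, ← Finset.sum_div, ← hS']
  have hlogP : Real.log P = ∑ i ∈ T, ((d i : ℝ)/m) * Real.log (lam i * Y i ^ 2) := by
    rw [hP', Real.log_prod (fun i hi => (Real.rpow_pos_of_pos (ha i hi) _).ne')]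
    exact Finset.sum_congr rfl fun i hi => Real.log_rpow (ha i hi) _
  have hlogG : Real.log G = ∑ i ∈ T, ((d i : ℝ)/m) * Real.log (d i : ℝ) := by
    rw [hG', Real.log_prod (fun i hi => (Real.rpow_pos_of_pos (hdpos i hi) _).ne')]
    exact Finset.sum_congr rfl fun i hi => Real.log_rpow (hdpos i hi) _
  set F : Fin (r+1) → ℝ := fun i => ((d i : ℝ)/m) *
    ((lam i * Y i ^ 2)/(d i)/A - 1 + Real.log A - Real.log ((lam i * Y i ^ 2)/(d i))) with hF'
  have hF_nonneg : ∀ i ∈ T, 0 ≤ F i := by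
    intro i hi
    have hz : 0 < (lam i * Y i ^ 2)/(d i) := div_pos (ha i hi) (hdpos i hi)
    have hlog : Real.log ((lam i * Y i ^ 2)/(d i)/A) ≤ (lam i * Y i ^ 2)/(d i)/A - 1 :=
      Real.log_le_sub_one_of_pos (div_pos hz hApos)
    rw [Real.log_div hz.ne' hApos.ne'] at hlog
    have hw : (0:ℝ) ≤ (d i : ℝ)/m := le_of_lt (div_pos (hdpos i hi) hm0)
    simp only [hF']
    apply mul_nonneg hw
    linarith
  have hF_sum : ∑ i ∈ T, F i = (Real.log G + Real.log A) - Real.log P := by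
    have h1 : ∀ i ∈ T, F i = (((d i : ℝ)/m) * ((lam i * Y i ^ 2)/(d i)))/A - (d i : ℝ)/m
        + ((d i : ℝ)/m) * Real.log A - ((d i : ℝ)/m) * Real.log (lam i * Y i ^ 2)
        + ((d i : ℝ)/m) * Real.log (d i : ℝ) := by
      intro i hi
      simp only [hF']
      rw [Real.log_div (ha i hi).ne' (hdpos i hi).ne']
      ring
    rw [Finset.sum_congr rfl h1, Finset.sum_add_distrib, Finset.sum_sub_distrib,
      Finset.sum_add_distrib, Finset.sum_sub_distrib, ← Finset.sum_div, hzsum,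
      hsumw, ← Finset.sum_mul, hsumw, ← hlogP, ← hlogG, div_self hApos.ne']
    ring
  -- AM-GM inequality: P ≤ G * A
  have hsumF : 0 ≤ ∑ i ∈ T, F i := Finset.sum_nonneg hF_nonneg
  have hlogle : Real.log P ≤ Real.log (G * A) := by
    rw [Real.log_mul hGpos.ne' hApos.ne']
    linarith [hF_sum, hsumF]
  have hPGA : P ≤ G * A := by
    have h2 := Real.exp_le_exp.mpr hlogle
    rwa [Real.exp_log hPpos, Real.exp_log (mul_pos hGpos hApos)] at h2
  have hGA : m * G⁻¹ * (G * A) = S := by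
    rw [hA']
    field_simp
  have hstep : m * G⁻¹ * P ≤ S := by
    have h1 : m * G⁻¹ * P ≤ m * G⁻¹ * (G * A) := by
      apply mul_le_mul_of_nonneg_left hPGA (by positivity)
    linarith [hGA]
  have hSN : S ≤ 1 - (1 - X 0) ^ 2 / m := by
    linarith [hCS, hU, sq_nonneg (X 0)]
  rw [hQG]
  constructor
  · rw [le_div_iff₀ hPpos]
    linarith [hstep, hSN]
  constructor
  · -- equality implies E
    intro hEq
    rw [div_eq_iff hPpos.ne'] at hEq
    have hNP : 1 - (1 - X 0) ^ 2 / m = m * G⁻¹ * P := hEq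
    have hX0sq : X 0 ^ 2 ≤ 0 := by linarith [hstep, hCS, hU, hNP]
    have hX0sq' : X 0 ^ 2 = 0 := le_antisymm hX0sq (sq_nonneg _)
    have hX0 : X 0 = 0 := by
      exact pow_eq_zero_iff two_ne_zero |>.mp hX0sq'
    have hNeqS : 1 - (1 - X 0) ^ 2 / m = S := by
      linarith [hstep, hSN, hNP]
    have hUval : ∑ i ∈ T, X i ^ 2 = (1 - X 0) ^ 2 / m := by
      linarith [hU, hNeqS, hX0sq']
    have hzero : ∑ i ∈ T, (X i - (1 - X 0)/m * Real.sqrt (d i)) ^ 2 = 0 := by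
      rw [hCSid]; linarith [hUval]
    have hXi : ∀ i ∈ T, X i = Real.sqrt (d i) / m := by
      intro i hi
      have h := (Finset.sum_eq_zero_iff_of_nonneg
        (fun j _ => sq_nonneg (X j - (1 - X 0)/m * Real.sqrt (d j)))).mp hzero i hi
      have h2 : X i - (1 - X 0)/m * Real.sqrt (d i) = 0 :=
        pow_eq_zero_iff two_ne_zero |>.mp h
      have h3 : X i = (1 - X 0)/m * Real.sqrt (d i) := by linarith
      rw [hX0] at h3
      rw [h3]; ring
    have hSval : S = (m - 1)/m := by
      have h1 : (1 - X 0) ^ 2 = 1 := by rw [hX0]; ring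
      rw [h1] at hNeqS
      field_simp at hNeqS ⊢
      linarith
    have hAval : A = (m - 1)/m ^ 2 := by
      rw [hA', hSval, div_div]; ring
    -- AM-GM equality
    have hPeq : P = G * A := by
      have h1 : m * G⁻¹ * P = S := by linarith [hNP, hNeqS]
      have h3 : m * G⁻¹ * P = m * G⁻¹ * (G * A) := by rw [h1, hGA]
      have h4 : (0:ℝ) < m * G⁻¹ := by positivity
      exact mul_left_cancel₀ h4.ne' h3
    have hFzero : ∑ i ∈ T, F i = 0 := by
      rw [hF_sum, hPeq, Real.log_mul hGpos.ne' hApos.ne']; ring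
    have hFi := (Finset.sum_eq_zero_iff_of_nonneg hF_nonneg).mp hFzero
    have haval : ∀ i ∈ T, lam i * Y i ^ 2 = (d i : ℝ) * A := by
      intro i hi
      have hw : (0:ℝ) < (d i : ℝ)/m := div_pos (hdpos i hi) hm0
      have h := hFi i hi
      simp only [hF'] at h
      have hexpr : (lam i * Y i ^ 2)/(d i)/A - 1 + Real.log A
          - Real.log ((lam i * Y i ^ 2)/(d i)) = 0 := by
        rcases mul_eq_zero.mp h with h' | h'
        · exact absurd h' hw.ne'
        · exact h'
      have hzpos : 0 < (lam i * Y i ^ 2)/(d i) := div_pos (ha i hi) (hdpos i hi)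
      have hz1 : (lam i * Y i ^ 2)/(d i)/A = 1 := by
        by_contra hne
        have hstrict := Real.log_lt_sub_one_of_pos (div_pos hzpos hApos) hne
        rw [Real.log_div hzpos.ne' hApos.ne'] at hstrict
        linarith [hexpr, hstrict]
      have hzA : (lam i * Y i ^ 2)/(d i) = A := by
        have h' := hz1
        rw [div_eq_iff hApos.ne', one_mul] at h'
        exact h'
      rw [div_eq_iff (hdpos i hi).ne'] at hzA
      linarith [hzA]
    refine ⟨hX0, fun i hi => ?_⟩
    have hiT' := hmemT i hi
    constructor
    · exact hXi i hiT'
    · rw [haval i hiT', hAval, hm]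
      ring
  · -- E implies equality
    rintro ⟨hX0, hvals⟩
    have haval : ∀ i ∈ T, lam i * Y i ^ 2 = ((m - 1)/m ^ 2) * (d i : ℝ) := by
      intro i hi
      rw [(hvals i (hiT i hi)).2, hm]
      ring
    have hcpos : (0:ℝ) < (m - 1)/m ^ 2 := by positivity
    have hPval : P = ((m - 1)/m ^ 2) * G := by
      rw [hP']
      have h1 : ∀ i ∈ T, (lam i * Y i ^ 2) ^ ((d i : ℝ)/m)
          = ((m - 1)/m ^ 2) ^ ((d i : ℝ)/m) * (d i : ℝ) ^ ((d i : ℝ)/m) := by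
        intro i hi
        rw [haval i hi, Real.mul_rpow hcpos.le (hdpos i hi).le]
      rw [Finset.prod_congr rfl h1, Finset.prod_mul_distrib, ← hG']
      congr 1
      have hc : ∀ i ∈ T, ((m - 1)/m ^ 2) ^ ((d i : ℝ)/m)
          = Real.exp (Real.log ((m - 1)/m ^ 2) * ((d i : ℝ)/m)) :=
        fun i hi => Real.rpow_def_of_pos hcpos _
      rw [Finset.prod_congr rfl hc, ← Real.exp_sum, ← Finset.mul_sum, hsumw, mul_one,
        Real.exp_log hcpos]
    rw [hX0, hPval]
    field_simp
    ring
end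

section
/- Suppose ψ : [s₀,∞) → ℝ is C¹ and ψ > 0. If ψ' = ψ·a(s) + b with b > 0, a(s) → −α < 0, and ψ is bounded, then ψ(s) → b/α as s → ∞. -/
open Set Filter

private lemma mono_aux (S : ℝ) (f f' : ℝ → ℝ)
    (hf : ∀ s ∈ Ici S, HasDerivAt f (f' s) s)
    (h0 : ∀ s ∈ Ici S, f' s ≤ 0) :
    ∀ s ∈ Ici S, f s ≤ f S := by
  intro s hs
  have hA : AntitoneOn f (Ici S) := by
    apply antitoneOn_of_deriv_nonpos (convex_Ici S)
    · exact fun x hx => (hf x hx).continuousAt.continuousWithinAt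
    · intro x hx
      rw [interior_Ici] at hx
      exact (hf x (Ioi_subset_Ici_self hx)).differentiableAt.differentiableWithinAt
    · intro x hx
      rw [interior_Ici] at hx
      rw [(hf x (Ioi_subset_Ici_self hx)).deriv]
      exact h0 x (Ioi_subset_Ici_self hx)
  exact hA self_mem_Ici hs hs

private lemma mono_aux' (S : ℝ) (f f' : ℝ → ℝ)
    (hf : ∀ s ∈ Ici S, HasDerivAt f (f' s) s)
    (h0 : ∀ s ∈ Ici S, 0 ≤ f' s) :
    ∀ s ∈ Ici S, f S ≤ f s := by
  intro s hs
  have h2 : -f s ≤ -f S := mono_aux S (fun t => -f t) (fun t => -(f' t))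
    (fun t ht => (hf t ht).neg) (fun t ht => by simpa using h0 t ht) s hs
  linarith

private lemma deriv_aux {ψ a : ℝ → ℝ} {b : ℝ} (K c s : ℝ) (hc : c ≠ 0) (hK : K = b / c)
    (h : HasDerivAt ψ (a s * ψ s + b) s) :
    HasDerivAt (fun t => (ψ t - K) * Real.exp (c * t))
      (Real.exp (c * s) * ((a s + c) * ψ s)) s := by
  have he : HasDerivAt (fun t => Real.exp (c * t)) (Real.exp (c * s) * c) s := by
    have := (Real.hasDerivAt_exp (c * s)).comp s ((hasDerivAt_id s).const_mul c)
    simpa [Function.comp_def] using this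
  have hd := (h.sub_const K).mul he
  refine hd.congr_deriv ?_
  have hKc : K * c = b := by rw [hK]; field_simp
  linear_combination (-Real.exp (c * s)) * hKc

private lemma tail_aux (C c : ℝ) (hc : 0 < c) :
    Tendsto (fun s => C * Real.exp (-(c * s))) atTop (nhds 0) := by
  have h1 : Tendsto (fun s : ℝ => c * s) atTop atTop :=
    tendsto_id.const_mul_atTop hc
  have h2 : Tendsto (fun s : ℝ => Real.exp (-(c * s))) atTop (nhds 0) :=
    Real.tendsto_exp_neg_atTop_nhds_zero.comp h1
  simpa using h2.const_mul C

set_option maxHeartbeats 1000000 in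
/-- Abstract form of Lemma 3.2: a bounded positive C¹ function `ψ` on `[s₀,∞)` with
`ψ' = a(s)ψ + b`, `b > 0` constant, `a` continuous and `a(s) → −α < 0`, satisfies
`ψ(s) → b/α` as `s → ∞`. -/

theorem stmt_18 (s₀ b α : ℝ) (hb : 0 < b) (hα : 0 < α) (ψ a : ℝ → ℝ)
    (hcont : ContinuousOn a (Ici s₀))
    (hder : ∀ s ∈ Ici s₀, HasDerivAt ψ (a s * ψ s + b) s)
    (hpos : ∀ s ∈ Ici s₀, 0 < ψ s)
    (hbdd : ∃ M, ∀ s ∈ Ici s₀, ψ s ≤ M)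
    (ha : Tendsto a atTop (nhds (-α))) :
    Tendsto ψ atTop (nhds (b / α)) := by
  rw [Metric.tendsto_atTop]
  intro δ hδ
  set ε := min (α / 2) (δ * α ^ 2 / (8 * b)) with hεdef
  have hε : 0 < ε := lt_min (by positivity) (by positivity)
  have hεα2 : ε ≤ α / 2 := min_le_left _ _
  have hεδ : ε ≤ δ * α ^ 2 / (8 * b) := min_le_right _ _
  have hεb : ε * (8 * b) ≤ δ * α ^ 2 := by
    rw [le_div_iff₀ (by positivity)] at hεδ; linarith
  have hc₁ : (0:ℝ) < α - ε := by linarith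
  have hc₂ : (0:ℝ) < α + ε := by linarith
  have hδα : δ * α * ε ≤ δ * α * (α / 2) :=
    mul_le_mul_of_nonneg_left hεα2 (by positivity)
  -- key constant bounds
  have hq : b / α * α = b := div_mul_cancel₀ b hα.ne'
  have hqε : b / α * ε ≤ δ * α / 8 := by
    rw [div_mul_eq_mul_div, div_le_div_iff₀ hα (by norm_num : (0:ℝ) < 8)]
    nlinarith [hεb]
  have hδε : δ * ε ≤ δ * (α / 2) := mul_le_mul_of_nonneg_left hεα2 hδ.le
  have hK₁ : b / (α - ε) ≤ b / α + δ / 2 := by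
    rw [div_le_iff₀ hc₁]
    nlinarith [hq, hqε, hδε, hδ, hα]
  have hK₂ : b / α - δ / 2 ≤ b / (α + ε) := by
    rw [le_div_iff₀ hc₂]
    nlinarith [hq, hqε, mul_nonneg hδ.le hε.le, hδ, hα]
  -- get S where a is ε-close to -α
  obtain ⟨S₁, hS₁⟩ := (Metric.tendsto_atTop.mp ha) ε hε
  set S := max s₀ S₁ with hSdef
  have hSs₀ : s₀ ≤ S := le_max_left _ _
  have haS : ∀ s, S ≤ s → -α - ε < a s ∧ a s < -α + ε := by
    intro s hs
    have := hS₁ s (le_trans (le_max_right _ _) hs)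
    rw [Real.dist_eq, abs_lt] at this
    constructor <;> linarith [this.1, this.2]
  set K₁ := b / (α - ε) with hK₁def
  set K₂ := b / (α + ε) with hK₂def
  have hup : ∀ s ∈ Ici S, (ψ s - K₁) * Real.exp ((α - ε) * s)
      ≤ (ψ S - K₁) * Real.exp ((α - ε) * S) := by
    refine mono_aux S (fun t => (ψ t - K₁) * Real.exp ((α - ε) * t))
      (fun s => Real.exp ((α - ε) * s) * ((a s + (α - ε)) * ψ s)) ?_ ?_
    · intro s hs
      exact deriv_aux K₁ (α - ε) s hc₁.ne' hK₁def (hder s (le_trans hSs₀ hs))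
    · intro s hs
      have h1 := (haS s hs).2
      have h2 := hpos s (le_trans hSs₀ hs)
      have h4 : a s + (α - ε) ≤ 0 := by linarith
      exact mul_nonpos_of_nonneg_of_nonpos (Real.exp_pos _).le
        (mul_nonpos_of_nonpos_of_nonneg h4 h2.le)
  have hlo : ∀ s ∈ Ici S, (ψ S - K₂) * Real.exp ((α + ε) * S)
      ≤ (ψ s - K₂) * Real.exp ((α + ε) * s) := by
    refine mono_aux' S (fun t => (ψ t - K₂) * Real.exp ((α + ε) * t))
      (fun s => Real.exp ((α + ε) * s) * ((a s + (α + ε)) * ψ s)) ?_ ?_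
    · intro s hs
      exact deriv_aux K₂ (α + ε) s hc₂.ne' hK₂def (hder s (le_trans hSs₀ hs))
    · intro s hs
      have h1 := (haS s hs).1
      have h2 := hpos s (le_trans hSs₀ hs)
      have h4 : 0 ≤ a s + (α + ε) := by linarith
      exact mul_nonneg (Real.exp_pos _).le (mul_nonneg h4 h2.le)
  -- tails
  set C₁ := (ψ S - K₁) * Real.exp ((α - ε) * S) with hC₁def
  set C₂ := (ψ S - K₂) * Real.exp ((α + ε) * S) with hC₂def
  obtain ⟨T₁, hT₁⟩ := Metric.tendsto_atTop.mp (tail_aux C₁ (α - ε) hc₁) (δ / 2) (by linarith)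
  obtain ⟨T₂, hT₂⟩ := Metric.tendsto_atTop.mp (tail_aux C₂ (α + ε) hc₂) (δ / 2) (by linarith)
  refine ⟨max S (max T₁ T₂), fun s hs => ?_⟩
  have hsS : S ≤ s := le_trans (le_max_left _ _) hs
  have hsT₁ : T₁ ≤ s := le_trans (le_trans (le_max_left _ _) (le_max_right _ _)) hs
  have hsT₂ : T₂ ≤ s := le_trans (le_trans (le_max_right _ _) (le_max_right _ _)) hs
  have e₁ : |C₁ * Real.exp (-((α - ε) * s))| < δ / 2 := by
    have := hT₁ s hsT₁; rwa [Real.dist_eq, sub_zero] at this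
  have e₂ : |C₂ * Real.exp (-((α + ε) * s))| < δ / 2 := by
    have := hT₂ s hsT₂; rwa [Real.dist_eq, sub_zero] at this
  have hub : ψ s - K₁ ≤ C₁ * Real.exp (-((α - ε) * s)) := by
    have h2 : ψ s - K₁ ≤ C₁ / Real.exp ((α - ε) * s) :=
      (le_div_iff₀ (Real.exp_pos _)).mpr (hup s hsS)
    rwa [div_eq_mul_inv, ← Real.exp_neg] at h2
  have hlb : C₂ * Real.exp (-((α + ε) * s)) ≤ ψ s - K₂ := by
    have h2 : C₂ / Real.exp ((α + ε) * s) ≤ ψ s - K₂ :=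
      (div_le_iff₀ (Real.exp_pos _)).mpr (hlo s hsS)
    rwa [div_eq_mul_inv, ← Real.exp_neg] at h2
  rw [Real.dist_eq, abs_lt]
  have a₁ := abs_lt.mp e₁
  have a₂ := abs_lt.mp e₂
  constructor
  · linarith [a₂.1, hlb, hK₂]
  · linarith [a₁.2, hub, hK₁]
end
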